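/- arXiv:2206.03772 — 4 statements merged into one kernel-verified Lean document; each statement's English description precedes it below -/
import Mathlib

section
/- Deterministic-coefficient case of Proposition 1.1, variation-of-constants formula for the deviation: the function D satisfies D(r) = d − ∫_t^r D(s)ρ(s) ds + ∫_{[t,r]} γ(s) dX(s) for every r∈[t,T]; moreover, D is the unique right-continuous function on [t,T] with this property. -/
/-!
Writing `D = γ X + K`, integration by parts for the Lebesgue–Stieltjes integral (proved with
Fubini) turns `∫_{[t,r]} γ dX` into `γ(r) X(r) - γ(t) x - ∫_t^r X γ'`, so the integral equation
for `D` becomes the linear equation `K' = -ρ K - X (ργ + γ')`, `K(t) = d - γ(t) x`, solved by the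
variation-of-constants formula `K = ν⁻¹ (K(t) - ∫ ν X (ργ + γ'))`. Since `X` is only
right-continuous, derivatives are one-sided throughout.

For uniqueness, the difference `F` of two right-continuous solutions satisfies `F = -∫ F ρ`, and
Grönwall's inequality for `∫ F ρ` forces `F = 0`, provided `E ρ` is integrable; this is shown by
looking at the supremum of the points up to which it is.
-/

open MeasureTheory Set Filter Topology Function

namespace StieltjesFunction

variable (A : StieltjesFunction ℝ) {a b : ℝ}

theorem setIntegral_Icc_intervalIntegral {g : ℝ → ℝ} (hab : a ≤ b) (hg : IntegrableOn g (Ioc a b)) :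
    ∫ u in Icc a b, (∫ s in u..b, g s) ∂A.measure
      = ∫ s in a..b, g s * (A s - leftLim A a) := by
  have : IsFiniteMeasure (A.measure.restrict (Icc a b)) :=
    isFiniteMeasure_restrict.mpr measure_Icc_lt_top.ne
  set F : ℝ → ℝ → ℝ := fun u s => (Ioi u).indicator g s
  have hF : Integrable (uncurry F)
      ((A.measure.restrict (Icc a b)).prod (volume.restrict (Ioc a b))) := by
    have h := ((integrable_const (μ := A.measure.restrict (Icc a b)) (1 : ℝ)).mul_prod hg).indicator
      (measurableSet_lt measurable_fst measurable_snd)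
    have hFeq : uncurry F = {p : ℝ × ℝ | p.1 < p.2}.indicator fun p => 1 * g p.2 := by
      funext p
      simp [F, indicator_apply, uncurry]
    rwa [hFeq]
  have hinner_left : ∀ u ∈ Icc a b, ∫ s in Ioc a b, F u s = ∫ s in u..b, g s := by
    intro u hu
    rw [setIntegral_indicator _root_.measurableSet_Ioi, Ioc_inter_Ioi, sup_eq_right.mpr hu.1,
      intervalIntegral.integral_of_le hu.2]
  have hinner_right : ∀ s ∈ Ioc a b,
      ∫ u in Icc a b, F u s ∂A.measure = g s * (leftLim A s - leftLim A a) := by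
    intro s hs
    have hFs : (fun u => F u s) = (Iio s).indicator (fun _ => g s) := by
      ext u; simp [F, indicator_apply]
    have hIco : Icc a b ∩ Iio s = Ico a s := by
      ext u
      simp only [mem_inter_iff, mem_Icc, mem_Iio, mem_Ico]
      grind [hs.2]
    rw [hFs, setIntegral_indicator _root_.measurableSet_Iio, hIco, setIntegral_const,
      measureReal_def, A.measure_Ico,
      ENNReal.toReal_ofReal (sub_nonneg.mpr (A.mono.leftLim hs.1.le)),
      smul_eq_mul, mul_comm]
  have hleftLim : ∀ᵐ s, leftLim A s = A s := by
    have := A.countable_leftLim_ne.measure_zero volume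
    filter_upwards [measure_eq_zero_iff_ae_notMem.mp this] with s hs
    simpa using hs
  calc ∫ u in Icc a b, (∫ s in u..b, g s) ∂A.measure
      = ∫ u in Icc a b, (∫ s in Ioc a b, F u s) ∂A.measure :=
        setIntegral_congr_fun measurableSet_Icc fun u hu => (hinner_left u hu).symm
    _ = ∫ s in Ioc a b, ∫ u in Icc a b, F u s ∂A.measure := integral_integral_swap hF
    _ = ∫ s in Ioc a b, g s * (leftLim A s - leftLim A a) :=
        setIntegral_congr_fun measurableSet_Ioc hinner_right
    _ = ∫ s in a..b, g s * (A s - leftLim A a) := by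
        rw [intervalIntegral.integral_of_le hab]
        refine integral_congr_ae (ae_restrict_of_ae ?_)
        filter_upwards [hleftLim] with s hs
        rw [hs]

theorem setIntegral_Icc_eq_sub_integral_deriv_mul {f f' : ℝ → ℝ} (hab : a ≤ b)
    (hf : ∀ s ∈ Icc a b, HasDerivAt f (f' s) s) (hf' : ContinuousOn f' (Icc a b)) :
    ∫ s in Icc a b, f s ∂A.measure = f b * A b - f a * leftLim A a - ∫ s in a..b, f' s * A s := by
  have hf'_uIcc : ContinuousOn f' (uIcc a b) := by rwa [uIcc_of_le hab]
  have hftc : ∀ u ∈ Icc a b, f u = f b - ∫ s in u..b, f' s := fun u hu => by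
    rw [intervalIntegral.integral_eq_sub_of_hasDerivAt
      (fun s hs => hf s (uIcc_subset_Icc hu (right_mem_Icc.mpr hab) hs))
      ((hf'.mono (uIcc_subset_Icc hu (right_mem_Icc.mpr hab))).intervalIntegrable)]
    ring
  have hprimitive : ContinuousOn (fun u => ∫ s in u..b, f' s) (Icc a b) := by
    simpa [uIcc_of_le hab] using
      intervalIntegral.continuousOn_primitive_interval_left hf'_uIcc.integrableOn_Icc
  have hA_mass : A.measure.real (Icc a b) = A b - leftLim A a := by
    rw [measureReal_def, A.measure_Icc, ENNReal.toReal_ofReal]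
    exact sub_nonneg.mpr ((A.mono.leftLim_le le_rfl).trans (A.mono hab))
  have hf'A : IntervalIntegrable (fun s => f' s * A s) volume a b :=
    A.mono.intervalIntegrable.continuousOn_mul hf'_uIcc
  calc ∫ s in Icc a b, f s ∂A.measure
      = ∫ u in Icc a b, (f b - ∫ s in u..b, f' s) ∂A.measure :=
        setIntegral_congr_fun measurableSet_Icc hftc
    _ = f b * (A b - leftLim A a) - ∫ s in a..b, f' s * (A s - leftLim A a) := by
        rw [integral_sub (integrableOn_const (C := f b) measure_Icc_lt_top.ne)
            hprimitive.integrableOn_Icc, setIntegral_const, hA_mass, smul_eq_mul, mul_comm,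
          A.setIntegral_Icc_intervalIntegral hab
            (hf'.integrableOn_Icc.mono_set Ioc_subset_Icc_self)]
    _ = f b * A b - f a * leftLim A a - ∫ s in a..b, f' s * A s := by
        simp only [mul_sub]
        rw [intervalIntegral.integral_sub hf'A (hf'_uIcc.intervalIntegrable.mul_const _),
          intervalIntegral.integral_mul_const,
          intervalIntegral.integral_eq_sub_of_hasDerivAt
            (fun s hs => hf s (by rwa [uIcc_of_le hab] at hs)) hf'_uIcc.intervalIntegrable]
        ring

theorem continuousWithinAt_Ioi_sub (B : StieltjesFunction ℝ) (s : ℝ) :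
    ContinuousWithinAt (fun x => A x - B x) (Ioi s) s :=
  ((A.right_continuous s).sub (B.right_continuous s)).mono Ioi_subset_Ici_self

end StieltjesFunction

section RightDerivatives

variable {f : ℝ → ℝ} {a b s : ℝ}

theorem ContinuousOn.continuousWithinAt_Ioi (hf : ContinuousOn f (Icc a b)) (hs : s ∈ Ico a b) :
    ContinuousWithinAt f (Ioi s) s :=
  (hf s (Ico_subset_Icc_self hs)).mono_of_mem_nhdsWithin (Icc_mem_nhdsGT_of_mem hs)

theorem continuousOn_primitive_of_le (hab : a ≤ b) (hf : IntegrableOn f (Icc a b)) :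
    ContinuousOn (fun u => ∫ x in a..u, f x) (Icc a b) := by
  have := intervalIntegral.continuousOn_primitive_interval (f := f) (by rwa [uIcc_of_le hab])
  rwa [uIcc_of_le hab] at this

theorem integral_hasDerivWithinAt_Ici_of_continuousWithinAt_Ioi (hf : IntegrableOn f (Icc a b))
    (hs : s ∈ Ico a b) (hfs : ContinuousWithinAt f (Ioi s) s) :
    HasDerivWithinAt (fun u => ∫ x in a..u, f x) (f s) (Ici s) s :=
  intervalIntegral.integral_hasDerivWithinAt_right
    ((hf.mono_set (uIcc_subset_Icc (left_mem_Icc.mpr (hs.1.trans hs.2.le))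
      (Ico_subset_Icc_self hs))).intervalIntegrable)
    ⟨Icc a b, Icc_mem_nhdsGT_of_mem hs, hf.aestronglyMeasurable⟩ hfs

end RightDerivatives

noncomputable def variationOfConstants (ρ f : ℝ → ℝ) (a c r : ℝ) : ℝ :=
  Real.exp (-∫ u in a..r, ρ u) * (c - ∫ s in a..r, Real.exp (∫ u in a..s, ρ u) * f s)

section VariationOfConstants

variable {ρ f : ℝ → ℝ} {a b : ℝ}

theorem continuousOn_variationOfConstants (hab : a ≤ b) (hρ : ContinuousOn ρ (Icc a b))
    (hf : IntegrableOn f (Icc a b)) (c : ℝ) :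
    ContinuousOn (variationOfConstants ρ f a c) (Icc a b) := by
  have hP := continuousOn_primitive_of_le hab hρ.integrableOn_Icc
  exact (Real.continuous_exp.comp_continuousOn hP.neg).mul (continuousOn_const.sub
    (continuousOn_primitive_of_le hab
      (IntegrableOn.continuousOn_mul (Real.continuous_exp.comp_continuousOn hP) hf isCompact_Icc)))

theorem variationOfConstants_eq_sub_integral (hab : a ≤ b) (hρ : ContinuousOn ρ (Icc a b))
    (hf : IntegrableOn f (Icc a b)) (hf_right : ∀ s ∈ Ioo a b, ContinuousWithinAt f (Ioi s) s)
    (c : ℝ) :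
    variationOfConstants ρ f a c b
      = c - ∫ s in a..b, (ρ s * variationOfConstants ρ f a c s + f s) := by
  set K := variationOfConstants ρ f a c
  set P := fun u => ∫ x in a..u, ρ x
  have hPcont := continuousOn_primitive_of_le hab hρ.integrableOn_Icc
  have hνf : IntegrableOn (fun s => Real.exp (P s) * f s) (Icc a b) :=
    IntegrableOn.continuousOn_mul (Real.continuous_exp.comp_continuousOn hPcont) hf isCompact_Icc
  have hKcont : ContinuousOn K (Icc a b) := continuousOn_variationOfConstants hab hρ hf c
  have hderiv : ∀ x ∈ Ioo a b, HasDerivWithinAt K (-(ρ x * K x + f x)) (Ioi x) x := by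
    intro x hx
    have hP : HasDerivAt P (ρ x) x :=
      intervalIntegral.integral_hasDerivAt_right
        (hρ.mono (uIcc_subset_Icc (left_mem_Icc.mpr hab)
          (Ioo_subset_Icc_self hx))).intervalIntegrable
        (ContinuousOn.stronglyMeasurableAtFilter isOpen_Ioo (hρ.mono Ioo_subset_Icc_self) x hx)
        (hρ.continuousAt (Icc_mem_nhds hx.1 hx.2))
    have hQ := integral_hasDerivWithinAt_Ici_of_continuousWithinAt_Ioi hνf (Ioo_subset_Ico_self hx)
      ((Real.continuous_exp.continuousAt.comp hP.continuousAt).continuousWithinAt.mul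
        (hf_right x hx))
    refine (hP.neg.exp.hasDerivWithinAt.mul
      ((hQ.mono Ioi_subset_Ici_self).const_sub c)).congr_deriv ?_
    simp only [K, variationOfConstants, P, Pi.neg_apply, Real.exp_neg]
    field_simp
    ring
  have hint : IntervalIntegrable (fun x => -(ρ x * K x + f x)) volume a b :=
    (intervalIntegrable_iff_integrableOn_Icc_of_le hab).mpr
      ((hρ.mul hKcont).integrableOn_Icc.add hf).neg
  have hKa : K a = c := by simp [K, variationOfConstants]
  have hftc := intervalIntegral.integral_eq_sub_of_hasDeriv_right_of_le hab hKcont hderiv hint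
  rw [intervalIntegral.integral_neg, hKa] at hftc
  linarith

end VariationOfConstants

section Uniqueness

variable {ρ : ℝ → ℝ} {a b : ℝ}

theorem eqOn_zero_of_eq_integral_mul {F : ℝ → ℝ} (hab : a ≤ b) (hρ : ContinuousOn ρ (Icc a b))
    (hF_right : ∀ s ∈ Ico a b, ContinuousWithinAt F (Ioi s) s)
    (hFρ : IntegrableOn (fun s => F s * ρ s) (Icc a b))
    (hF : ∀ r ∈ Icc a b, F r = ∫ s in a..r, F s * ρ s) :
    ∀ r ∈ Icc a b, F r = 0 := by
  obtain ⟨M, hM⟩ := isCompact_Icc.exists_bound_of_continuousOn hρ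
  have hgronwall := norm_le_gronwallBound_of_norm_deriv_right_le (δ := 0) (ε := 0) (K := M)
    (continuousOn_primitive_of_le hab hFρ)
    (fun x hx => integral_hasDerivWithinAt_Ici_of_continuousWithinAt_Ioi hFρ hx
      ((hF_right x hx).mul (hρ.continuousWithinAt_Ioi hx)))
    (by simp)
    (fun x hx => by
      rw [add_zero, norm_mul, mul_comm, ← hF x (Ico_subset_Icc_self hx)]
      exact mul_le_mul_of_nonneg_right (hM x (Ico_subset_Icc_self hx)) (norm_nonneg _))
  intro r hr
  simpa [gronwallBound_ε0_δ0, ← hF r hr] using hgronwall r hr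

theorem eqOn_of_eq_sub_integral_mul_of_integrableOn {E D g : ℝ → ℝ} (hab : a ≤ b)
    (hρ : ContinuousOn ρ (Icc a b))
    (hE_right : ∀ s ∈ Ico a b, ContinuousWithinAt E (Ioi s) s)
    (hD_right : ∀ s ∈ Ico a b, ContinuousWithinAt D (Ioi s) s)
    (hEρ : IntegrableOn (fun s => E s * ρ s) (Icc a b))
    (hDρ : IntegrableOn (fun s => D s * ρ s) (Icc a b))
    (hE : ∀ r ∈ Icc a b, E r = g r - ∫ s in a..r, E s * ρ s)
    (hD : ∀ r ∈ Icc a b, D r = g r - ∫ s in a..r, D s * ρ s) :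
    ∀ r ∈ Icc a b, E r = D r := by
  refine fun r hr => sub_eq_zero.mp (eqOn_zero_of_eq_integral_mul (F := E - D) hab hρ.neg
    (fun x hx => (hE_right x hx).sub (hD_right x hx))
    ((hDρ.sub hEρ).congr_fun (fun x _ => by simp only [Pi.sub_apply, Pi.neg_apply]; ring)
      measurableSet_Icc)
    (fun x hx => ?_) r hr)
  have hint : ∀ {f : ℝ → ℝ}, IntegrableOn f (Icc a b) → IntervalIntegrable f volume a x :=
    fun h => (intervalIntegrable_iff_integrableOn_Icc_of_le hx.1).mpr
      (h.mono_set (Icc_subset_Icc_right hx.2))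
  have hsplit : ∫ u in a..x, (E - D) u * (-ρ) u
      = (∫ u in a..x, D u * ρ u) - ∫ u in a..x, E u * ρ u := by
    rw [← intervalIntegral.integral_sub (hint hDρ) (hint hEρ)]
    congr 1
    ext u
    simp only [Pi.sub_apply, Pi.neg_apply]
    ring
  rw [hsplit, Pi.sub_apply, hE x hx, hD x hx]
  ring

theorem eqOn_of_eq_sub_integral_mul {E D g : ℝ → ℝ} (hab : a ≤ b) (hρ : ContinuousOn ρ (Icc a b))
    (hE_right : ∀ s ∈ Ico a b, ContinuousWithinAt E (Ioi s) s)
    (hD_right : ∀ s ∈ Ico a b, ContinuousWithinAt D (Ioi s) s)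
    (hDρ : IntegrableOn (fun s => D s * ρ s) (Icc a b))
    (hE : ∀ r ∈ Icc a b, E r = g r - ∫ s in a..r, E s * ρ s)
    (hD : ∀ r ∈ Icc a b, D r = g r - ∫ s in a..r, D s * ρ s) :
    ∀ r ∈ Icc a b, E r = D r := by
  have heq_of_integrable : ∀ r ∈ Icc a b, IntegrableOn (fun s => E s * ρ s) (Icc a r) →
      ∀ s ∈ Icc a r, E s = D s := fun r hr hEρ =>
    have hsub : Icc a r ⊆ Icc a b := Icc_subset_Icc_right hr.2
    have hIco : Ico a r ⊆ Ico a b := Ico_subset_Ico_right hr.2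
    eqOn_of_eq_sub_integral_mul_of_integrableOn hr.1 (hρ.mono hsub)
      (fun s hs => hE_right s (hIco hs)) (fun s hs => hD_right s (hIco hs)) hEρ
      (hDρ.mono_set hsub) (fun s hs => hE s (hsub hs)) (fun s hs => hD s (hsub hs))
  -- `E ρ` is integrable up to `r₀`, where it agrees with `D ρ`, and beyond `r₀`, where the
  -- integral in the equation for `E` takes the junk value `0`.
  set S := {r ∈ Icc a b | IntegrableOn (fun s => E s * ρ s) (Icc a r)}
  have haS : a ∈ S := ⟨left_mem_Icc.mpr hab, by
    rw [Icc_self]; exact integrableOn_singleton (hx := measure_singleton_lt_top)⟩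
  have hS_bdd : BddAbove S := ⟨b, fun r hr => hr.1.2⟩
  set r₀ := sSup S
  have hr₀ : r₀ ∈ Icc a b := ⟨le_csSup hS_bdd haS, csSup_le ⟨a, haS⟩ fun r hr => hr.1.2⟩
  have hsub : Icc a r₀ ⊆ Icc a b := Icc_subset_Icc_right hr₀.2
  have hbelow : IntegrableOn (fun s => E s * ρ s) (Icc a r₀) := by
    rw [integrableOn_Icc_iff_integrableOn_Ico]
    refine ((hDρ.mono_set hsub).mono_set Ico_subset_Icc_self).congr_fun (fun s hs => ?_)
      measurableSet_Ico
    obtain ⟨r, hrS, hsr⟩ := exists_lt_of_lt_csSup ⟨a, haS⟩ hs.2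
    rw [heq_of_integrable r hrS.1 hrS.2 s ⟨hs.1, hsr.le⟩]
  have habove : IntegrableOn (fun s => E s * ρ s) (Ioc r₀ b) := by
    have hΦ := continuousOn_primitive_of_le hab hDρ
    refine ((hDρ.add ((hΦ.mul hρ).integrableOn_Icc)).mono_set
      (Ioc_subset_Icc_self.trans (Icc_subset_Icc_left hr₀.1))).congr_fun (fun s hs => ?_)
      measurableSet_Ioc
    have hs' : s ∈ Icc a b := ⟨hr₀.1.trans hs.1.le, hs.2⟩
    have hEρ_not : ¬ IntervalIntegrable (fun s => E s * ρ s) volume a s := by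
      rw [intervalIntegrable_iff_integrableOn_Icc_of_le hs'.1]
      exact fun h => notMem_of_csSup_lt hs.1 hS_bdd ⟨hs', h⟩
    rw [Pi.add_apply, Pi.mul_apply, hE s hs', intervalIntegral.integral_undef hEρ_not, hD s hs']
    ring
  have hb : IntegrableOn (fun s => E s * ρ s) (Icc a b) :=
    (hbelow.union habove).mono_set (Icc_union_Ioc_eq_Icc hr₀.1 hr₀.2).ge
  exact heq_of_integrable b (right_mem_Icc.mpr hab) hb

end Uniqueness

noncomputable def deviation (ρ γ γ' X : ℝ → ℝ) (a x d r : ℝ) : ℝ :=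
  γ r * X r + variationOfConstants ρ (fun s => X s * (ρ s * γ s + γ' s)) a (d - γ a * x) r

section Deviation

variable {ρ γ γ' X : ℝ → ℝ} {a b x d : ℝ}

theorem integrableOn_deviation_mul (hab : a ≤ b) (hρ : ContinuousOn ρ (Icc a b))
    (hγ : ContinuousOn γ (Icc a b)) (hγ' : ContinuousOn γ' (Icc a b))
    (hX : IntegrableOn X (Icc a b)) :
    IntegrableOn (fun s => deviation ρ γ γ' X a x d s * ρ s) (Icc a b) := by
  have hcoeff : ContinuousOn (fun s => ρ s * γ s + γ' s) (Icc a b) := (hρ.mul hγ).add hγ'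
  have hK := continuousOn_variationOfConstants hab hρ
    (hX.mul_continuousOn hcoeff isCompact_Icc) (d - γ a * x)
  refine ((hX.mul_continuousOn (hγ.mul hρ) isCompact_Icc).add
    (hK.mul hρ).integrableOn_Icc).congr_fun (fun s _ => ?_) measurableSet_Icc
  simp only [deviation, Pi.add_apply, Pi.mul_apply]
  ring

theorem continuousWithinAt_Ioi_deviation (hab : a ≤ b) (hρ : ContinuousOn ρ (Icc a b))
    (hγ : ContinuousOn γ (Icc a b)) (hγ' : ContinuousOn γ' (Icc a b))
    (hX : IntegrableOn X (Icc a b)) (hX_right : ∀ s ∈ Ico a b, ContinuousWithinAt X (Ioi s) s) :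
    ∀ s ∈ Ico a b, ContinuousWithinAt (deviation ρ γ γ' X a x d) (Ioi s) s := fun s hs =>
  ((hγ.continuousWithinAt_Ioi hs).mul (hX_right s hs)).add
    ((continuousOn_variationOfConstants hab hρ
      (hX.mul_continuousOn ((hρ.mul hγ).add hγ') isCompact_Icc) _).continuousWithinAt_Ioi hs)

theorem deviation_eq_sub_integral (A B : StieltjesFunction ℝ) (hX : ∀ s, X s = A s - B s)
    (hx : leftLim A a - leftLim B a = x) (hab : a ≤ b) (hρ : ContinuousOn ρ (Icc a b))
    (hγ : ∀ s ∈ Icc a b, HasDerivAt γ (γ' s) s) (hγ' : ContinuousOn γ' (Icc a b)) :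
    deviation ρ γ γ' X a x d b
      = d - (∫ s in a..b, deviation ρ γ γ' X a x d s * ρ s)
        + ((∫ s in Icc a b, γ s ∂A.measure) - ∫ s in Icc a b, γ s ∂B.measure) := by
  have hγcont : ContinuousOn γ (Icc a b) := fun s hs => (hγ s hs).continuousAt.continuousWithinAt
  have hγ'_uIcc : ContinuousOn γ' (uIcc a b) := by rwa [uIcc_of_le hab]
  have hX_int : IntegrableOn X (Icc a b) := by
    rw [← intervalIntegrable_iff_integrableOn_Icc_of_le hab, funext hX]
    exact A.mono.intervalIntegrable.sub B.mono.intervalIntegrable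
  have hcoeff : ContinuousOn (fun s => ρ s * γ s + γ' s) (Icc a b) := (hρ.mul hγcont).add hγ'
  have hK := variationOfConstants_eq_sub_integral hab hρ
    (hX_int.mul_continuousOn hcoeff isCompact_Icc)
    (fun s hs => by
      rw [funext hX]
      exact (A.continuousWithinAt_Ioi_sub B s).mul
        (hcoeff.continuousWithinAt_Ioi (Ioo_subset_Ico_self hs)))
    (d - γ a * x)
  have hγ'A : IntervalIntegrable (fun s => γ' s * A s) volume a b :=
    A.mono.intervalIntegrable.continuousOn_mul hγ'_uIcc
  have hγ'B : IntervalIntegrable (fun s => γ' s * B s) volume a b :=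
    B.mono.intervalIntegrable.continuousOn_mul hγ'_uIcc
  have hsplit : ∫ s in a..b, (ρ s * variationOfConstants ρ (fun s => X s * (ρ s * γ s + γ' s)) a
        (d - γ a * x) s + X s * (ρ s * γ s + γ' s))
      = (∫ s in a..b, deviation ρ γ γ' X a x d s * ρ s)
        + ((∫ s in a..b, γ' s * A s) - ∫ s in a..b, γ' s * B s) := by
    rw [← intervalIntegral.integral_sub hγ'A hγ'B, ← intervalIntegral.integral_add
      ((intervalIntegrable_iff_integrableOn_Icc_of_le hab).mpr
        (integrableOn_deviation_mul hab hρ hγcont hγ' hX_int))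
      (hγ'A.sub hγ'B)]
    congr 1
    ext s
    simp only [deviation, hX]
    ring
  rw [deviation]
  linear_combination hK - hsplit - A.setIntegral_Icc_eq_sub_integral_deriv_mul hab hγ hγ'
    + B.setIntegral_Icc_eq_sub_integral_deriv_mul hab hγ hγ' + γ b * hX b + γ a * hx

end Deviation

theorem deviation_variation_of_constants_general
    (t T x d : ℝ) (htT : t < T)
    (ρ γ γ' : ℝ → ℝ)
    (hρ : ContinuousOn ρ (Icc t T))
    (hγderiv : ∀ s ∈ Icc t T, HasDerivAt γ (γ' s) s)
    (hγ'cont : ContinuousOn γ' (Icc t T))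
    (A B : StieltjesFunction ℝ)
    (hx : Function.leftLim A t - Function.leftLim B t = x)
    (X : ℝ → ℝ) (hX : ∀ s, X s = A s - B s)
    (ν : ℝ → ℝ) (hν : ∀ r, ν r = Real.exp (∫ s in t..r, ρ s))
    (D : ℝ → ℝ)
    (hD : ∀ r, D r = γ r * X r + (ν r)⁻¹ *
      (d - γ t * x - ∫ s in t..r, X s * (ν s * (ρ s * γ s + γ' s)))) :
    (∀ r ∈ Icc t T,
      D r = d - (∫ s in t..r, D s * ρ s)
        + ((∫ s in Icc t r, γ s ∂A.measure) - ∫ s in Icc t r, γ s ∂B.measure)) ∧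
    (∀ E : ℝ → ℝ,
      (∀ s ∈ Ico t T, Tendsto E (nhdsWithin s (Ioi s)) (nhds (E s))) →
      (∀ r ∈ Icc t T,
        E r = d - (∫ s in t..r, E s * ρ s)
          + ((∫ s in Icc t r, γ s ∂A.measure) - ∫ s in Icc t r, γ s ∂B.measure)) →
      ∀ r ∈ Icc t T, E r = D r) := by
  obtain rfl : D = deviation ρ γ γ' X t x d := by
    funext r
    simp only [hD, hν, deviation, variationOfConstants, Real.exp_neg]
    congr 3
    exact intervalIntegral.integral_congr fun s _ => by ring
  have hγ : ContinuousOn γ (Icc t T) := fun s hs => (hγderiv s hs).continuousAt.continuousWithinAt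
  have hX_int : IntegrableOn X (Icc t T) := by
    rw [← intervalIntegrable_iff_integrableOn_Icc_of_le htT.le, funext hX]
    exact A.mono.intervalIntegrable.sub B.mono.intervalIntegrable
  have hX_right : ∀ s, ContinuousWithinAt X (Ioi s) s := fun s => by
    rw [funext hX]
    exact A.continuousWithinAt_Ioi_sub B s
  have hexist : ∀ r ∈ Icc t T, deviation ρ γ γ' X t x d r
      = d - (∫ s in t..r, deviation ρ γ γ' X t x d s * ρ s)
        + ((∫ s in Icc t r, γ s ∂A.measure) - ∫ s in Icc t r, γ s ∂B.measure) := fun r hr =>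
    have hsub : Icc t r ⊆ Icc t T := Icc_subset_Icc_right hr.2
    deviation_eq_sub_integral A B hX hx hr.1 (hρ.mono hsub) (fun s hs => hγderiv s (hsub hs))
      (hγ'cont.mono hsub)
  refine ⟨hexist, fun E hE_right hE => eqOn_of_eq_sub_integral_mul htT.le hρ hE_right
    (continuousWithinAt_Ioi_deviation htT.le hρ hγ hγ'cont hX_int fun s _ => hX_right s)
    (integrableOn_deviation_mul htT.le hρ hγ hγ'cont hX_int)
    (g := fun r => d + ((∫ s in Icc t r, γ s ∂A.measure) - ∫ s in Icc t r, γ s ∂B.measure))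
    (fun r hr => by rw [hE r hr]; ring) (fun r hr => by rw [hexist r hr]; ring)⟩

/-- deterministic-coefficient case of Proposition 1.1,
variation-of-constants formula for the deviation: with `X = A - B` a right-continuous
function of bounded variation on `[t,T]` (the convention `X(t-) = x` being encoded by
`leftLim A t - leftLim B t = x`), `ν(r) = exp(∫_t^r ρ)` and
`D(r) = γ(r) X(r) + ν(r)⁻¹ (d - γ(t) x - ∫_t^r X (νγ)')`, the function `D` satisfies
`D(r) = d - ∫_t^r D(s) ρ(s) ds + ∫_{[t,r]} γ dX` for every `r ∈ [t,T]`, and `D` is the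
unique right-continuous function on `[t,T]` with this property. -/
theorem deviation_variation_of_constants
    (t T x d : ℝ) (htT : t < T)
    (ρ γ γ' : ℝ → ℝ)
    (hρ : ContinuousOn ρ (Icc t T))
    (hγpos : ∀ s ∈ Icc t T, 0 < γ s)
    (hγderiv : ∀ s ∈ Icc t T, HasDerivAt γ (γ' s) s)
    (hγ'cont : ContinuousOn γ' (Icc t T))
    (A B : StieltjesFunction ℝ)
    (hx : Function.leftLim A t - Function.leftLim B t = x)
    (X : ℝ → ℝ) (hX : ∀ s, X s = A s - B s)
    (ν : ℝ → ℝ) (hν : ∀ r, ν r = Real.exp (∫ s in t..r, ρ s))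
    (D : ℝ → ℝ)
    (hD : ∀ r, D r = γ r * X r + (ν r)⁻¹ *
      (d - γ t * x - ∫ s in t..r, X s * (ν s * (ρ s * γ s + γ' s)))) :
    (∀ r ∈ Icc t T,
      D r = d - (∫ s in t..r, D s * ρ s)
        + ((∫ s in Icc t r, γ s ∂A.measure) - ∫ s in Icc t r, γ s ∂B.measure)) ∧
    (∀ E : ℝ → ℝ,
      (∀ s ∈ Ico t T, Tendsto E (nhdsWithin s (Ioi s)) (nhds (E s))) →
      (∀ r ∈ Icc t T,
        E r = d - (∫ s in t..r, E s * ρ s)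
          + ((∫ s in Icc t r, γ s ∂A.measure) - ∫ s in Icc t r, γ s ∂B.measure)) →
      ∀ r ∈ Icc t T, E r = D r) :=
  deviation_variation_of_constants_general t T x d htT ρ γ γ' hρ hγderiv hγ'cont A B hx X hX ν hν D
    hD
end

section
/- Deterministic-coefficient case of Proposition 1.1, pathwise representation of the trading costs: with D as defined, and D(s−) := γ(s)X(s−) + ν(s)^{−1}·(d − γ(t)x − ∫_t^s X(r)·(νγ)′(r) dr) for s∈[t,T], one has ∫_{[t,T]} D(s−) dX(s) + (1/2)·∫_{[t,T]} ΔX(s)·γ(s) dX(s) = (1/2)·( γ(T)^{−1} D(T)² − γ(t)^{−1} d² − ∫_t^T D(s)²·ν(s)²·(ν^{−2}γ^{−1})′(s) ds ). -/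
open MeasureTheory Set

noncomputable section

/-!
Write `dX = ε dμ` with `μ = μ_A + μ_B` and `ε = dμ_A/dμ - dμ_B/dμ`. Integrating by parts against
`(νγ)'` shows that `Y := ν D` equals `d + ∫_{[t,s]} νγ dX` and that `ν D(s-) = Y(s-)`, so the jump
of `Y` at `s` is `ν(s) γ(s) ΔX(s)` and, with `g = ν⁻²γ⁻¹`, the left-hand side is
`½ ∫ g νγ (Y + Y(·-)) dX`. Fubini gives the product rule `Y(s)² = d² + ∫_{[t,s]} (Y + Y(·-)) dY`
and then `∫_t^T Y² g' = g(T) Y(T)² - g(t) d² - ∫ g (Y + Y(·-)) dY`; since `D² ν² = Y²`, the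
right-hand side is the same integral.
-/

section RegionFubini

variable {X Y : Type*} [MeasurableSpace X] [MeasurableSpace Y] {μ : Measure X} {ν : Measure Y}
  {S : Set (X × Y)} {φ : X → ℝ} {k : Y → ℝ}

theorem integral_indicator_mul_prod_left (hS : MeasurableSet S) (x : X) :
    ∫ y, S.indicator (fun p => φ p.1 * k p.2) (x, y) ∂ν
      = φ x * ∫ y in {y | (x, y) ∈ S}, k y ∂ν := by
  rw [← integral_const_mul,
    ← integral_indicator (s := {y | (x, y) ∈ S}) (hS.preimage measurable_prodMk_left)]
  congr 1 with y

theorem integral_indicator_mul_prod_right (hS : MeasurableSet S) (y : Y) :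
    ∫ x, S.indicator (fun p => φ p.1 * k p.2) (x, y) ∂μ
      = k y * ∫ x in {x | (x, y) ∈ S}, φ x ∂μ := by
  rw [← integral_const_mul,
    ← integral_indicator (s := {x | (x, y) ∈ S}) (hS.preimage measurable_prodMk_right)]
  congr 1 with x
  by_cases hx : (x, y) ∈ S <;> simp [hx, mul_comm]

variable [SFinite ν]

theorem integrable_mul_setIntegral_section (hS : MeasurableSet S) (hφ : Integrable φ μ)
    (hk : Integrable k ν) :
    Integrable (fun x => φ x * ∫ y in {y | (x, y) ∈ S}, k y ∂ν) μ := by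
  simpa only [integral_indicator_mul_prod_left hS] using
    ((hφ.mul_prod hk).indicator hS).integral_prod_left

theorem integral_mul_setIntegral_section_comm [SFinite μ] (hS : MeasurableSet S)
    (hφ : Integrable φ μ) (hk : Integrable k ν) :
    ∫ x, φ x * (∫ y in {y | (x, y) ∈ S}, k y ∂ν) ∂μ
      = ∫ y, k y * (∫ x in {x | (x, y) ∈ S}, φ x ∂μ) ∂ν := by
  simp_rw [← integral_indicator_mul_prod_left hS, ← integral_indicator_mul_prod_right hS]
  exact integral_integral_swap (f := fun x y => S.indicator (fun p => φ p.1 * k p.2) (x, y))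
    ((hφ.mul_prod hk).indicator hS)

end RegionFubini

section Calculus

variable {a b : ℝ} {f f' : ℝ → ℝ}

theorem integral_eq_sub_of_hasDerivAt_of_subset_Icc {u v : ℝ} (huv : u ≤ v) (hu : a ≤ u)
    (hv : v ≤ b) (hf : ContinuousOn f (Icc a b)) (hff' : ∀ r ∈ Ioo a b, HasDerivAt f (f' r) r)
    (hf' : IntervalIntegrable f' volume a b) :
    ∫ r in u..v, f' r = f v - f u :=
  intervalIntegral.integral_eq_sub_of_hasDeriv_right_of_le huv (hf.mono (Icc_subset_Icc hu hv))
    (fun r hr => (hff' r ⟨hu.trans_lt hr.1, hr.2.trans_le hv⟩).hasDerivWithinAt)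
    (hf'.mono_set (uIcc_subset_uIcc (mem_uIcc_of_le hu (huv.trans hv))
      (mem_uIcc_of_le (hu.trans huv) hv)))

theorem setIntegral_Ici_restrict_Ioc {u : ℝ} (hu : a ≤ u) (hf : ContinuousOn f (Icc a b))
    (hff' : ∀ r ∈ Ioo a b, HasDerivAt f (f' r) r) (hf' : IntervalIntegrable f' volume a b) :
    ∫ r in Ici u, f' r ∂(volume.restrict (Ioc a b))
      = (Iic b).indicator (fun u => f b - f u) u := by
  have hset : (Ici u ∩ Ioc a b : Set ℝ) =ᵐ[volume] Ioc u b := by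
    have : Ioi u ∩ Ioc a b = Ioc u b := by rw [inter_comm, Ioc_inter_Ioi, max_eq_right hu]
    exact this ▸ ae_eq_set_inter Ioi_ae_eq_Ici.symm (ae_eq_refl _)
  rw [Measure.restrict_restrict measurableSet_Ici, setIntegral_congr_set hset]
  by_cases hub : u ≤ b
  · rw [indicator_of_mem (mem_Iic.2 hub), ← intervalIntegral.integral_of_le hub,
      integral_eq_sub_of_hasDerivAt_of_subset_Icc hub hu le_rfl hf hff' hf']
  · rw [indicator_of_notMem (mt mem_Iic.1 hub), Ioc_eq_empty (fun h => hub h.le),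
      Measure.restrict_empty, integral_zero_measure]

theorem intervalIntegrable_of_eqOn_Ioo {g : ℝ → ℝ} (hab : a ≤ b) (hg : ContinuousOn g (Icc a b))
    (hfg : EqOn f g (Ioo a b)) : IntervalIntegrable f volume a b := by
  rw [intervalIntegrable_iff_integrableOn_Ioc_of_le hab, integrableOn_Ioc_iff_integrableOn_Ioo]
  exact (hg.integrableOn_Icc.mono_set Ioo_subset_Icc_self).congr_fun hfg.symm measurableSet_Ioo

theorem hasDerivAt_exp_intervalIntegral {ρ : ℝ → ℝ} {r : ℝ} (hρ : ContinuousOn ρ (Icc a b))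
    (hr : r ∈ Ioo a b) :
    HasDerivAt (fun r => Real.exp (∫ s in a..r, ρ s)) (ρ r * Real.exp (∫ s in a..r, ρ s)) r := by
  have hint : IntervalIntegrable ρ volume a r :=
    (hρ.mono (Icc_subset_Icc le_rfl hr.2.le)).intervalIntegrable_of_Icc hr.1.le
  rw [mul_comm]
  exact (intervalIntegral.integral_hasDerivAt_right hint
    ((hρ.mono Ioo_subset_Icc_self).stronglyMeasurableAtFilter isOpen_Ioo r hr)
    (hρ.continuousAt (Icc_mem_nhds hr.1 hr.2))).exp

theorem continuousOn_exp_intervalIntegral {ρ : ℝ → ℝ} (hρ : ContinuousOn ρ (Icc a b))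
    (hab : a ≤ b) : ContinuousOn (fun r => Real.exp (∫ s in a..r, ρ s)) (Icc a b) := by
  have := intervalIntegral.continuousOn_primitive_interval (μ := volume)
    (hρ.integrableOn_Icc.mono_set (uIcc_of_le hab).le)
  rw [uIcc_of_le hab] at this
  exact Real.continuous_exp.comp_continuousOn this

theorem hasDerivAt_inv_sq_mul_inv {u v : ℝ → ℝ} {u' v' r : ℝ} (hu : HasDerivAt u u' r)
    (hv : HasDerivAt v v' r) (hu0 : u r ≠ 0) (hv0 : v r ≠ 0) :
    HasDerivAt (fun r => (u r ^ 2)⁻¹ * (v r)⁻¹)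
      (-(2 * u' * v r + u r * v') / (u r ^ 3 * v r ^ 2)) r :=
  ((hu.pow 2).inv (pow_ne_zero 2 hu0)).mul (hv.inv hv0) |>.congr_deriv (by
    simp only [Pi.pow_apply, Pi.inv_apply]; field_simp; ring)

theorem intervalIntegrable_of_hasDerivAt_inv_sq_mul_inv {u v u' v' w : ℝ → ℝ} (hab : a ≤ b)
    (hu : ContinuousOn u (Icc a b)) (hv : ContinuousOn v (Icc a b))
    (hu' : ContinuousOn u' (Icc a b)) (hv' : ContinuousOn v' (Icc a b))
    (hu0 : ∀ r ∈ Icc a b, u r ≠ 0) (hv0 : ∀ r ∈ Icc a b, v r ≠ 0)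
    (hud : ∀ r ∈ Ioo a b, HasDerivAt u (u' r) r) (hvd : ∀ r ∈ Ioo a b, HasDerivAt v (v' r) r)
    (hw : ∀ r ∈ Ioo a b, HasDerivAt (fun r => (u r ^ 2)⁻¹ * (v r)⁻¹) (w r) r) :
    IntervalIntegrable w volume a b := by
  refine intervalIntegrable_of_eqOn_Ioo hab
    (g := fun r => -(2 * u' r * v r + u r * v' r) / (u r ^ 3 * v r ^ 2))
    (ContinuousOn.div (by fun_prop) (by fun_prop) fun r hr => by simp [hu0 r hr, hv0 r hr])
    fun r hr => ?_
  have hr' := Ioo_subset_Icc_self hr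
  exact (hw r hr).unique (hasDerivAt_inv_sq_mul_inv (hud r hr) (hvd r hr) (hu0 r hr') (hv0 r hr'))

end Calculus

theorem MeasureTheory.Integrable.continuousOn_mul_of_ae_mem {μ : Measure ℝ} {a b : ℝ}
    {f k : ℝ → ℝ} (hμ : ∀ᵐ u ∂μ, u ∈ Icc a b) (hf : ContinuousOn f (Icc a b))
    (hk : Integrable k μ) : Integrable (fun u => f u * k u) μ := by
  rw [← Measure.restrict_eq_self_of_ae_mem hμ] at hk ⊢
  exact IntegrableOn.continuousOn_mul hf hk isCompact_Icc

theorem setIntegral_Iic_sub_setIntegral_Iio {μ : Measure ℝ} {k : ℝ → ℝ} (hk : Integrable k μ)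
    (s : ℝ) : ∫ u in Iic s, k u ∂μ - ∫ u in Iio s, k u ∂μ = μ.real {s} * k s := by
  rw [← Iio_union_right, setIntegral_union (s := Iio s)
    (disjoint_singleton_right.2 (lt_irrefl s)) (measurableSet_singleton s) hk.integrableOn
    hk.integrableOn, integral_singleton, smul_eq_mul]
  ring

section StieltjesIntegration

variable {μ : Measure ℝ} [SFinite μ] {a b : ℝ} {k f f' : ℝ → ℝ}

theorem intervalIntegral_setIntegral_Iic_mul_deriv (hab : a ≤ b) (ha : ∀ᵐ u ∂μ, a ≤ u)
    (hk : Integrable k μ) (hf : ContinuousOn f (Icc a b))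
    (hff' : ∀ r ∈ Ioo a b, HasDerivAt f (f' r) r) (hf' : IntervalIntegrable f' volume a b) :
    ∫ r in a..b, (∫ u in Iic r, k u ∂μ) * f' r
      = f b * ∫ u in Iic b, k u ∂μ - ∫ u in Iic b, f u * k u ∂μ := by
  have hfk : Integrable (fun u => f u * k u) (μ.restrict (Iic b)) := by
    refine hk.restrict.continuousOn_mul_of_ae_mem ?_ hf
    filter_upwards [ae_restrict_mem measurableSet_Iic, ae_restrict_of_ae ha] with u hub hau
    exact ⟨hau, hub⟩
  calc ∫ r in a..b, (∫ u in Iic r, k u ∂μ) * f' r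
      = ∫ r, f' r * ∫ u in {u | (r, u) ∈ {p : ℝ × ℝ | p.2 ≤ p.1}}, k u ∂μ
          ∂(volume.restrict (Ioc a b)) := by
        simp_rw [intervalIntegral.integral_of_le hab, mul_comm]; rfl
    _ = ∫ u, k u * ∫ r in Ici u, f' r ∂(volume.restrict (Ioc a b)) ∂μ :=
        integral_mul_setIntegral_section_comm (measurableSet_le measurable_snd measurable_fst)
          hf'.1 hk
    _ = ∫ u in Iic b, (f b - f u) * k u ∂μ := by
        rw [← integral_indicator measurableSet_Iic]
        refine integral_congr_ae ?_
        filter_upwards [ha] with u hu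
        rw [setIntegral_Ici_restrict_Ioc hu hf hff' hf']
        by_cases hub : u ∈ Iic b <;> simp [hub, mul_comm]
    _ = f b * ∫ u in Iic b, k u ∂μ - ∫ u in Iic b, f u * k u ∂μ := by
        simp_rw [sub_mul]
        rw [integral_sub (hk.restrict.const_mul _) hfk, integral_const_mul]

theorem IntervalIntegrable.setIntegral_Iic_mul (hab : a ≤ b) (hk : Integrable k μ)
    (hf' : IntervalIntegrable f' volume a b) :
    IntervalIntegrable (fun r => (∫ u in Iic r, k u ∂μ) * f' r) volume a b := by
  have : Integrable (fun r => f' r * ∫ u in Iic r, k u ∂μ) (volume.restrict (Ioc a b)) :=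
    integrable_mul_setIntegral_section (S := {p : ℝ × ℝ | p.2 ≤ p.1})
      (measurableSet_le measurable_snd measurable_fst) hf'.1 hk
  rw [intervalIntegrable_iff_integrableOn_Ioc_of_le hab, IntegrableOn]
  simpa only [mul_comm (f' _)] using this

theorem intervalIntegral_mul_deriv_of_eq_add_setIntegral {x : ℝ} {X : ℝ → ℝ} (hab : a ≤ b)
    (ha : ∀ᵐ u ∂μ, a ≤ u) (hk : Integrable k μ) (hf : ContinuousOn f (Icc a b))
    (hff' : ∀ r ∈ Ioo a b, HasDerivAt f (f' r) r) (hf' : IntervalIntegrable f' volume a b)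
    (hX : ∀ r ∈ Icc a b, X r = x + ∫ u in Iic r, k u ∂μ) :
    ∫ r in a..b, X r * f' r = f b * X b - f a * x - ∫ u in Iic b, f u * k u ∂μ := by
  rw [intervalIntegral.integral_congr (g := fun r => x * f' r + (∫ u in Iic r, k u ∂μ) * f' r)
      fun r hr => by rw [uIcc_of_le hab] at hr; simp only [hX r hr]; ring,
    intervalIntegral.integral_add (hf'.const_mul x) (hf'.setIntegral_Iic_mul hab hk),
    intervalIntegral.integral_const_mul,
    integral_eq_sub_of_hasDerivAt_of_subset_Icc hab le_rfl le_rfl hf hff' hf',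
    intervalIntegral_setIntegral_Iic_mul_deriv hab ha hk hf hff' hf', hX b ⟨hab, le_rfl⟩]
  ring

theorem sq_integral_eq_integral_mul_setIntegral_Iic_add_Iio (hk : Integrable k μ) :
    (∫ u, k u ∂μ) ^ 2 = ∫ u, k u * ((∫ v in Iic u, k v ∂μ) + ∫ v in Iio u, k v ∂μ) ∂μ := by
  have hlt : MeasurableSet {p : ℝ × ℝ | p.2 < p.1} :=
    measurableSet_lt measurable_snd measurable_fst
  have hIic : Integrable (fun u => k u * ∫ v in Iic u, k v ∂μ) μ :=
    integrable_mul_setIntegral_section (measurableSet_le measurable_snd measurable_fst) hk hk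
  have hIio : Integrable (fun u => k u * ∫ v in Iio u, k v ∂μ) μ :=
    integrable_mul_setIntegral_section hlt hk hk
  have hIoi : Integrable (fun u => k u * ∫ v in Ioi u, k v ∂μ) μ :=
    integrable_mul_setIntegral_section (measurableSet_lt measurable_fst measurable_snd) hk hk
  have hswap : ∫ u, k u * ∫ v in Iio u, k v ∂μ ∂μ = ∫ u, k u * ∫ v in Ioi u, k v ∂μ ∂μ :=
    integral_mul_setIntegral_section_comm hlt hk hk
  calc (∫ u, k u ∂μ) ^ 2 = ∫ u, k u * ∫ v, k v ∂μ ∂μ := by rw [integral_mul_const, sq]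
    _ = ∫ u, k u * ((∫ v in Iic u, k v ∂μ) + ∫ v in Ioi u, k v ∂μ) ∂μ := by
        congr 1 with u
        rw [← setIntegral_union (Iic_disjoint_Ioi le_rfl) measurableSet_Ioi hk.integrableOn
          hk.integrableOn, Iic_union_Ioi, setIntegral_univ]
    _ = ∫ u, k u * ((∫ v in Iic u, k v ∂μ) + ∫ v in Iio u, k v ∂μ) ∂μ := by
        simp_rw [mul_add]
        rw [integral_add hIic hIoi, integral_add hIic hIio, hswap]

theorem sq_setIntegral_Iic (hk : Integrable k μ) (s : ℝ) :
    (∫ u in Iic s, k u ∂μ) ^ 2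
      = ∫ u in Iic s, k u * ((∫ v in Iic u, k v ∂μ) + ∫ v in Iio u, k v ∂μ) ∂μ := by
  rw [sq_integral_eq_integral_mul_setIntegral_Iic_add_Iio hk.restrict]
  refine setIntegral_congr_fun measurableSet_Iic fun u (hu : u ≤ s) => ?_
  simp only [Measure.restrict_restrict_of_subset (Iic_subset_Iic.2 hu),
    Measure.restrict_restrict_of_subset (Iio_subset_Iic_self.trans (Iic_subset_Iic.2 hu))]

theorem intervalIntegral_sq_mul_deriv {g g' : ℝ → ℝ} (hab : a ≤ b) (ha : ∀ᵐ u ∂μ, a ≤ u)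
    (hk : Integrable k μ) (hg : ContinuousOn g (Icc a b))
    (hgg' : ∀ r ∈ Ioo a b, HasDerivAt g (g' r) r) (hg' : IntervalIntegrable g' volume a b)
    (d : ℝ) :
    ∫ r in a..b, (d + ∫ u in Iic r, k u ∂μ) ^ 2 * g' r
      = g b * (d + ∫ u in Iic b, k u ∂μ) ^ 2 - g a * d ^ 2
        - ∫ u in Iic b, g u * (k u * ((d + ∫ v in Iic u, k v ∂μ) + (d + ∫ v in Iio u, k v ∂μ)))
            ∂μ := by
  set κ : ℝ → ℝ := fun u => k u * ((d + ∫ v in Iic u, k v ∂μ) + (d + ∫ v in Iio u, k v ∂μ))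
  have hκ_eq : κ = fun u =>
      2 * d * k u + k u * ((∫ v in Iic u, k v ∂μ) + ∫ v in Iio u, k v ∂μ) := by
    ext u; ring
  have hF : Integrable (fun u => k u * ((∫ v in Iic u, k v ∂μ) + ∫ v in Iio u, k v ∂μ)) μ := by
    simp_rw [mul_add]
    exact (integrable_mul_setIntegral_section (measurableSet_le measurable_snd measurable_fst)
      hk hk).add
      (integrable_mul_setIntegral_section (measurableSet_lt measurable_snd measurable_fst) hk hk)
  have hκ : Integrable κ μ := hκ_eq ▸ (hk.const_mul (2 * d)).add hF
  have hsq : ∀ r, (d + ∫ u in Iic r, k u ∂μ) ^ 2 = d ^ 2 + ∫ u in Iic r, κ u ∂μ := fun r => by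
    rw [hκ_eq, integral_add (hk.const_mul _).restrict hF.restrict, integral_const_mul,
      ← sq_setIntegral_Iic hk]
    ring
  simp_rw [hsq, add_mul]
  rw [intervalIntegral.integral_add (hg'.const_mul _) (hg'.setIntegral_Iic_mul hab hκ),
    intervalIntegral.integral_const_mul,
    integral_eq_sub_of_hasDerivAt_of_subset_Icc hab le_rfl le_rfl hg hgg' hg',
    intervalIntegral_setIntegral_Iic_mul_deriv hab ha hκ hg hgg' hg']
  ring

end StieltjesIntegration

def signedDensity {X : Type*} [MeasurableSpace X] (α β : Measure X) (x : X) : ℝ :=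
  (α.rnDeriv (α + β) x).toReal - (β.rnDeriv (α + β) x).toReal

section SignedDensity

variable {X : Type*} [MeasurableSpace X] {α β : Measure X} [IsFiniteMeasure α]
  [IsFiniteMeasure β] {f : X → ℝ}

theorem integrable_signedDensity_mul (hα : Integrable f α) (hβ : Integrable f β) :
    Integrable (fun x => signedDensity α β x * f x) (α + β) := by
  simp_rw [signedDensity, sub_mul]
  exact ((integrable_rnDeriv_smul_iff (Measure.AbsolutelyContinuous.rfl.add_right β)).2 hα).sub
    ((integrable_rnDeriv_smul_iff (Measure.AbsolutelyContinuous.rfl.add_right' α)).2 hβ)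

theorem integral_signedDensity_mul (hα : Integrable f α) (hβ : Integrable f β) :
    ∫ x, signedDensity α β x * f x ∂(α + β) = ∫ x, f x ∂α - ∫ x, f x ∂β := by
  have hαμ : α ≪ α + β := Measure.AbsolutelyContinuous.rfl.add_right β
  have hβμ : β ≪ α + β := Measure.AbsolutelyContinuous.rfl.add_right' α
  have h1 : Integrable (fun x => (α.rnDeriv (α + β) x).toReal * f x) (α + β) :=
    (integrable_rnDeriv_smul_iff hαμ).2 hα
  have h2 : Integrable (fun x => (β.rnDeriv (α + β) x).toReal * f x) (α + β) :=
    (integrable_rnDeriv_smul_iff hβμ).2 hβ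
  simp_rw [signedDensity, sub_mul]
  rw [integral_sub h1 h2]
  exact congr_arg₂ _ (integral_rnDeriv_smul hαμ) (integral_rnDeriv_smul hβμ)

theorem integrable_signedDensity : Integrable (signedDensity α β) (α + β) := by
  simpa using integrable_signedDensity_mul (α := α) (β := β) (integrable_const 1)
    (integrable_const 1)

theorem setIntegral_signedDensity {S : Set X} (hS : MeasurableSet S) :
    ∫ x in S, signedDensity α β x ∂(α + β) = α.real S - β.real S := by
  have h1 : ∀ ν : Measure X, [IsFiniteMeasure ν] → Integrable (S.indicator (1 : X → ℝ)) ν :=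
    fun ν _ => (integrable_const 1).indicator hS
  rw [← integral_indicator_one hS, ← integral_indicator_one hS,
    ← integral_signedDensity_mul (h1 α) (h1 β), ← integral_indicator hS]
  congr 1 with x
  by_cases hx : x ∈ S <;> simp [hx]

theorem integral_sub_add_half_integral_sub {Dm J Θ Ψ : X → ℝ} (hΘ : Integrable Θ (α + β))
    (hΨ : Integrable Ψ (α + β)) (hDm : ∀ᵐ x ∂(α + β), Dm x = Ψ x)
    (hJ : ∀ᵐ x ∂(α + β), J x = Θ x - Ψ x) :
    ((∫ x, Dm x ∂α) - ∫ x, Dm x ∂β) + (1 / 2) * ((∫ x, J x ∂α) - ∫ x, J x ∂β)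
      = (1 / 2) * ∫ x, signedDensity α β x * (Θ x + Ψ x) ∂(α + β) := by
  obtain ⟨hΘα, hΘβ⟩ := integrable_add_measure.1 hΘ
  obtain ⟨hΨα, hΨβ⟩ := integrable_add_measure.1 hΨ
  obtain ⟨hDmα, hDmβ⟩ := ae_add_measure_iff.1 hDm
  obtain ⟨hJα, hJβ⟩ := ae_add_measure_iff.1 hJ
  rw [integral_congr_ae hDmα, integral_congr_ae hDmβ, integral_congr_ae hJα,
    integral_congr_ae hJβ, integral_signedDensity_mul (f := fun x => Θ x + Ψ x) (hΘα.add hΨα)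
      (hΘβ.add hΨβ), integral_sub hΘα hΨα, integral_sub hΘβ hΨβ, integral_add hΘα hΨα,
    integral_add hΘβ hΨβ]
  ring

end SignedDensity

namespace StieltjesFunction

variable (F : StieltjesFunction ℝ) {t T s : ℝ}

instance isFiniteMeasure_restrict_Icc : IsFiniteMeasure (F.measure.restrict (Icc t T)) :=
  isFiniteMeasure_restrict.2 measure_Icc_lt_top.ne

theorem measureReal_restrict_Icc_Iic (hs : s ∈ Icc t T) :
    (F.measure.restrict (Icc t T)).real (Iic s) = F s - Function.leftLim F t := by
  have : Iic s ∩ Icc t T = Icc t s := by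
    ext r; simp only [mem_inter_iff, mem_Iic, mem_Icc]; constructor
    · rintro ⟨hrs, htr, -⟩; exact ⟨htr, hrs⟩
    · rintro ⟨htr, hrs⟩; exact ⟨hrs, htr, hrs.trans hs.2⟩
  rw [measureReal_restrict_apply measurableSet_Iic, this, measureReal_def, F.measure_Icc,
    ENNReal.toReal_ofReal (sub_nonneg.2 (F.mono.leftLim_le hs.1))]

theorem measureReal_restrict_Icc_Iio (hs : s ∈ Icc t T) :
    (F.measure.restrict (Icc t T)).real (Iio s)
      = Function.leftLim F s - Function.leftLim F t := by
  have : Iio s ∩ Icc t T = Ico t s := by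
    ext r; simp only [mem_inter_iff, mem_Iio, mem_Icc, mem_Ico]; constructor
    · rintro ⟨hrs, htr, -⟩; exact ⟨htr, hrs⟩
    · rintro ⟨htr, hrs⟩; exact ⟨hrs, htr, hrs.le.trans hs.2⟩
  rw [measureReal_restrict_apply measurableSet_Iio, this, measureReal_def, F.measure_Ico,
    ENNReal.toReal_ofReal (sub_nonneg.2 (F.mono.leftLim hs.1))]

variable (G : StieltjesFunction ℝ)

theorem leftLim_sub (s : ℝ) :
    Function.leftLim (fun r => F r - G r) s = Function.leftLim F s - Function.leftLim G s :=
  leftLim_eq_of_tendsto ((F.mono.tendsto_leftLim s).sub (G.mono.tendsto_leftLim s))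

theorem sub_eq_add_setIntegral_signedDensity_Iic (hs : s ∈ Icc t T) :
    F s - G s = Function.leftLim F t - Function.leftLim G t
      + ∫ u in Iic s, signedDensity (F.measure.restrict (Icc t T)) (G.measure.restrict (Icc t T)) u
          ∂(F.measure.restrict (Icc t T) + G.measure.restrict (Icc t T)) := by
  rw [setIntegral_signedDensity measurableSet_Iic, F.measureReal_restrict_Icc_Iic hs,
    G.measureReal_restrict_Icc_Iic hs]
  ring

theorem leftLim_sub_eq_add_setIntegral_signedDensity_Iio (hs : s ∈ Icc t T) :
    Function.leftLim (fun r => F r - G r) s = Function.leftLim F t - Function.leftLim G t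
      + ∫ u in Iio s, signedDensity (F.measure.restrict (Icc t T)) (G.measure.restrict (Icc t T)) u
          ∂(F.measure.restrict (Icc t T) + G.measure.restrict (Icc t T)) := by
  rw [leftLim_sub, setIntegral_signedDensity measurableSet_Iio, F.measureReal_restrict_Icc_Iio hs,
    G.measureReal_restrict_Icc_Iio hs]
  ring

end StieltjesFunction

theorem quadratic_cost_formula {α β : Measure ℝ} [IsFiniteMeasure α] [IsFiniteMeasure β]
    {a b d : ℝ} {g g' h Dm J : ℝ → ℝ} (hab : a ≤ b) (hαβ : ∀ᵐ u ∂(α + β), u ∈ Icc a b)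
    (hg : ContinuousOn g (Icc a b)) (hgg' : ∀ r ∈ Ioo a b, HasDerivAt g (g' r) r)
    (hg' : IntervalIntegrable g' volume a b) (hh : ContinuousOn h (Icc a b))
    (hDm : ∀ s ∈ Icc a b,
      Dm s = g s * h s * (d + ∫ u in Iio s, h u * signedDensity α β u ∂(α + β)))
    (hJ : ∀ s ∈ Icc a b, J s = g s * h s * ((∫ u in Iic s, h u * signedDensity α β u ∂(α + β))
      - ∫ u in Iio s, h u * signedDensity α β u ∂(α + β))) :
    ((∫ s, Dm s ∂α) - ∫ s, Dm s ∂β) + (1 / 2) * ((∫ s, J s ∂α) - ∫ s, J s ∂β)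
      = (1 / 2) * (g b * (d + ∫ u in Iic b, h u * signedDensity α β u ∂(α + β)) ^ 2
          - g a * d ^ 2
          - ∫ r in a..b, (d + ∫ u in Iic r, h u * signedDensity α β u ∂(α + β)) ^ 2 * g' r) := by
  set μ := α + β
  set k := fun u => h u * signedDensity α β u
  have hk : Integrable k μ := integrable_signedDensity.continuousOn_mul_of_ae_mem hαβ hh
  have hint : ∀ S : Set (ℝ × ℝ), MeasurableSet S →
      Integrable (fun s => g s * h s * (d + ∫ u in {u | (s, u) ∈ S}, k u ∂μ)) μ := fun S hS => by
    have hgh : Integrable (fun s => g s * h s) μ := by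
      simpa using (integrable_const (1 : ℝ)).continuousOn_mul_of_ae_mem hαβ (hg.mul hh)
    simp_rw [mul_add]
    exact (hgh.mul_const d).add (integrable_mul_setIntegral_section hS hgh hk)
  have hY : Integrable (fun s => g s * h s * (d + ∫ u in Iic s, k u ∂μ)) μ :=
    hint _ (measurableSet_le measurable_snd measurable_fst)
  have hYm : Integrable (fun s => g s * h s * (d + ∫ u in Iio s, k u ∂μ)) μ :=
    hint _ (measurableSet_lt measurable_snd measurable_fst)
  rw [integral_sub_add_half_integral_sub hY hYm (hαβ.mono hDm)
      (hαβ.mono fun s hs => by rw [hJ s hs]; ring),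
    intervalIntegral_sq_mul_deriv hab (hαβ.mono fun u hu => hu.1) hk hg hgg' hg' d,
    sub_sub_cancel, setIntegral_eq_integral_of_ae_compl_eq_zero (s := Iic b)
      (hαβ.mono fun u hu hub => absurd hu.2 hub)]
  congr 2 with s
  ring

/-- deterministic-coefficient case of Proposition 1.1, pathwise
representation of the trading costs: with `X = A - B` a right-continuous function of
bounded variation on `[t,T]` (the convention `X(t-) = x` being encoded by
`leftLim A t - leftLim B t = x`), `ν(r) = exp(∫_t^r ρ)`,
`D(s) = γ(s) X(s) + ν(s)⁻¹ (d - γ(t) x - ∫_t^s X (νγ)')`, its left-limit version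
`D₋(s) = γ(s) X(s-) + ν(s)⁻¹ (d - γ(t) x - ∫_t^s X (νγ)')`, and `w = (ν⁻²γ⁻¹)'`,
one has
`∫_{[t,T]} D₋ dX + (1/2) ∫_{[t,T]} ΔX · γ dX
  = (1/2) (γ(T)⁻¹ D(T)² - γ(t)⁻¹ d² - ∫_t^T D(s)² ν(s)² w(s) ds)`. -/
theorem pathwise_cost_representation
    (t T x d : ℝ) (htT : t < T)
    (ρ γ γ' : ℝ → ℝ)
    (hρ : ContinuousOn ρ (Icc t T))
    (hγpos : ∀ s ∈ Icc t T, 0 < γ s)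
    (hγderiv : ∀ s ∈ Icc t T, HasDerivAt γ (γ' s) s)
    (hγ'cont : ContinuousOn γ' (Icc t T))
    (A B : StieltjesFunction ℝ)
    (hx : Function.leftLim A t - Function.leftLim B t = x)
    (X : ℝ → ℝ) (hX : ∀ s, X s = A s - B s)
    (ν : ℝ → ℝ) (hν : ∀ r, ν r = Real.exp (∫ s in t..r, ρ s))
    (D : ℝ → ℝ)
    (hD : ∀ r, D r = γ r * X r + (ν r)⁻¹ *
      (d - γ t * x - ∫ s in t..r, X s * (ν s * (ρ s * γ s + γ' s))))
    (Dm : ℝ → ℝ)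
    (hDm : ∀ s, Dm s = γ s * Function.leftLim X s + (ν s)⁻¹ *
      (d - γ t * x - ∫ r in t..s, X r * (ν r * (ρ r * γ r + γ' r))))
    (w : ℝ → ℝ)
    (hw : ∀ s ∈ Icc t T, HasDerivAt (fun r => ((ν r) ^ 2)⁻¹ * (γ r)⁻¹) (w s) s) :
    ((∫ s in Icc t T, Dm s ∂A.measure) - ∫ s in Icc t T, Dm s ∂B.measure)
      + (1/2) * ((∫ s in Icc t T, (X s - Function.leftLim X s) * γ s ∂A.measure)
          - ∫ s in Icc t T, (X s - Function.leftLim X s) * γ s ∂B.measure)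
      = (1/2) * ((γ T)⁻¹ * D T ^ 2 - (γ t)⁻¹ * d ^ 2
          - ∫ s in t..T, D s ^ 2 * ν s ^ 2 * w s) := by
  set I := Icc t T
  set α := A.measure.restrict I
  set β := B.measure.restrict I
  have hμI : ∀ᵐ u ∂(α + β), u ∈ I :=
    ae_add_measure_iff.2 ⟨ae_restrict_mem measurableSet_Icc, ae_restrict_mem measurableSet_Icc⟩
  have hν0 : ∀ r, ν r ≠ 0 := fun r => hν r ▸ (Real.exp_pos _).ne'
  have hνt : ν t = 1 := by simp [hν]
  have hνc : ContinuousOn ν I := funext hν ▸ continuousOn_exp_intervalIntegral hρ htT.le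
  have hνd : ∀ r ∈ Ioo t T, HasDerivAt ν (ρ r * ν r) r := fun r hr => by
    simpa only [← hν] using hasDerivAt_exp_intervalIntegral hρ hr
  have hγ0 : ∀ s ∈ I, γ s ≠ 0 := fun s hs => (hγpos s hs).ne'
  have hγc : ContinuousOn γ I := fun s hs => (hγderiv s hs).continuousAt.continuousWithinAt
  have hγd : ∀ r ∈ Ioo t T, HasDerivAt γ (γ' r) r := fun r hr => hγderiv r (Ioo_subset_Icc_self hr)
  have hhd : ∀ r ∈ Ioo t T, HasDerivAt (fun r => ν r * γ r) (ν r * (ρ r * γ r + γ' r)) r :=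
    fun r hr => ((hνd r hr).mul (hγd r hr)).congr_deriv (by ring)
  have hXI : ∀ s ∈ I, X s = x + ∫ u in Iic s, signedDensity α β u ∂(α + β) := fun s hs => by
    rw [hX, A.sub_eq_add_setIntegral_signedDensity_Iic B hs, hx]
  have hXm : ∀ s ∈ I,
      Function.leftLim X s = x + ∫ u in Iio s, signedDensity α β u ∂(α + β) := fun s hs => by
    rw [funext hX, A.leftLim_sub_eq_add_setIntegral_signedDensity_Iio B hs, hx]
  have hY : ∀ s ∈ I,
      ν s * D s = d + ∫ u in Iic s, ν u * γ u * signedDensity α β u ∂(α + β) := fun s hs => by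
    have hsub : Icc t s ⊆ I := Icc_subset_Icc le_rfl hs.2
    rw [hD, intervalIntegral_mul_deriv_of_eq_add_setIntegral (f := fun r => ν r * γ r) hs.1
      (hμI.mono fun u hu => hu.1) integrable_signedDensity ((hνc.mul hγc).mono hsub)
      (fun r hr => hhd r ⟨hr.1, hr.2.trans_le hs.2⟩)
      ((hνc.mul ((hρ.mul hγc).add hγ'cont)).mono hsub |>.intervalIntegrable_of_Icc hs.1)
      fun r hr => hXI r (hsub hr), hνt]
    field_simp [hν0 s]
    ring
  have hjump : ∀ s ∈ I, (∫ u in Iic s, ν u * γ u * signedDensity α β u ∂(α + β))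
      - ∫ u in Iio s, ν u * γ u * signedDensity α β u ∂(α + β)
      = ν s * γ s * (X s - Function.leftLim X s) := fun s hs => by
    have hk : Integrable (fun u => ν u * γ u * signedDensity α β u) (α + β) :=
      integrable_signedDensity.continuousOn_mul_of_ae_mem hμI (hνc.mul hγc)
    rw [hXI s hs, hXm s hs, add_sub_add_left_eq_sub, setIntegral_Iic_sub_setIntegral_Iio hk,
      setIntegral_Iic_sub_setIntegral_Iio integrable_signedDensity]
    ring
  have hYm : ∀ s ∈ I,
      ν s * Dm s = d + ∫ u in Iio s, ν u * γ u * signedDensity α β u ∂(α + β) := fun s hs => by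
    calc ν s * Dm s = ν s * D s - ν s * γ s * (X s - Function.leftLim X s) := by
          rw [hD, hDm]; ring
      _ = _ := by rw [hY s hs, ← hjump s hs]; ring
  rw [quadratic_cost_formula (h := fun r => ν r * γ r) (d := d) htT.le hμI
    (fun s hs => (hw s hs).continuousAt.continuousWithinAt)
    (fun r hr => hw r (Ioo_subset_Icc_self hr))
    (intervalIntegrable_of_hasDerivAt_inv_sq_mul_inv htT.le hνc hγc (hρ.mul hνc) hγ'cont
      (fun r _ => hν0 r) hγ0 hνd hγd fun r hr => hw r (Ioo_subset_Icc_self hr))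
    (hνc.mul hγc) (fun s hs => ?_) (fun s hs => ?_)]
  · rw [intervalIntegral.integral_congr (g := fun s => D s ^ 2 * ν s ^ 2 * w s)
      fun s hs => by rw [← hY s (by rwa [uIcc_of_le htT.le] at hs)]; ring,
      ← hY T ⟨htT.le, le_rfl⟩, hνt]
    field_simp [hν0 T]
  · rw [← hYm s hs]
    field_simp [hν0 s, hγ0 s hs]
  · rw [hjump s hs]
    field_simp [hν0 s, hγ0 s hs]
end
end

section
/- Explicit solution of the Riccati equation in the Obizhaeva–Wang model with risk aversion (Example 5.1): The function K satisfies: the denominator (ρ/2+λ)·tanh(√λ·ρ·(T−s)/√(λ+ρ)) + √(λ(ρ+λ)) is strictly positive for all s∈[0,T]; K(T)=1/2; 0 < K(s) ≤ 1/2 for all s∈[0,T]; and K is differentiable on [0,T] with K′(s) = (ρ²/(ρ+λ))·K(s)² + (2λρ/(ρ+λ))·K(s) − λρ/(ρ+λ) for every s∈[0,T]. -/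
/-!
With `u = tanh (a (T - s))`, `a = √λ ρ / √(λ + ρ)` and `c = √(λ (ρ + λ))`, `K` is the Möbius
transform `u ↦ (λ u + c) / (2 ((ρ/2 + λ) u + c))` of `u`. Since `u ≥ 0` on `[0, T]`, the
denominator is positive and `K ∈ (0, 1/2]`, with `K(T) = 1/2` because `u(T) = 0`. The tanh
satisfies `u' = -a (1 - u²)`, and the quotient rule gives `K' = ρ a c (1 - u²) / (4 D²)` with `D`
the denominator; the relations `a c = ρ λ` and `c² = λ (ρ + λ)` turn this into the Riccati
right-hand side.
-/

open Set

noncomputable section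

namespace Real

lemma hasDerivAt_tanh (x : ℝ) : HasDerivAt tanh (1 - tanh x ^ 2) x := by
  have h := (hasDerivAt_sinh x).div (hasDerivAt_cosh x) (cosh_pos x).ne'
  rw [show tanh = sinh / cosh from funext fun y => tanh_eq_sinh_div_cosh y]
  refine h.congr_deriv ?_
  have := (cosh_pos x).ne'
  simp only [Pi.div_apply]
  field_simp

lemma tanh_nonneg {x : ℝ} (hx : 0 ≤ x) : 0 ≤ tanh x := by
  rw [tanh_eq_sinh_div_cosh]
  exact div_nonneg (sinh_nonneg_iff.2 hx) (cosh_pos x).le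

end Real

def riccatiProfile (lam ρ c u : ℝ) : ℝ :=
  (1/2) * (lam * u + c) / ((ρ/2 + lam) * u + c)

def riccatiDriver (lam ρ k : ℝ) : ℝ :=
  ρ ^ 2 / (ρ + lam) * k ^ 2 + 2 * lam * ρ / (ρ + lam) * k - lam * ρ / (ρ + lam)

section RiccatiProfile

variable {lam ρ c u : ℝ}

lemma riccatiProfile_zero (hc : c ≠ 0) : riccatiProfile lam ρ c 0 = 1/2 := by
  simp [riccatiProfile, hc]

lemma riccatiProfile_pos (hlam : 0 ≤ lam) (hρ : 0 ≤ ρ) (hc : 0 < c) (hu : 0 ≤ u) :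
    0 < riccatiProfile lam ρ c u := by
  unfold riccatiProfile
  positivity

lemma riccatiProfile_le_half (hlam : 0 ≤ lam) (hρ : 0 ≤ ρ) (hc : 0 < c) (hu : 0 ≤ u) :
    riccatiProfile lam ρ c u ≤ 1/2 := by
  unfold riccatiProfile
  rw [div_le_iff₀ (by positivity)]
  nlinarith [mul_nonneg hρ hu]

lemma hasDerivAt_riccatiProfile (hD : (ρ/2 + lam) * u + c ≠ 0) :
    HasDerivAt (riccatiProfile lam ρ c) (-(ρ * c) / (4 * ((ρ/2 + lam) * u + c) ^ 2)) u := by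
  have hN := (((hasDerivAt_id' u).const_mul lam).add_const c).const_mul (1/2 : ℝ)
  have hD' := ((hasDerivAt_id' u).const_mul (ρ/2 + lam)).add_const c
  refine (hN.div hD' hD).congr_deriv ?_
  field_simp
  ring

lemma hasDerivAt_riccatiProfile_tanh {a T s : ℝ} (hac : a * c = ρ * lam)
    (hc : c ^ 2 = lam * (ρ + lam)) (hρlam : ρ + lam ≠ 0)
    (hD : (ρ/2 + lam) * Real.tanh (a * (T - s)) + c ≠ 0) :
    HasDerivAt (fun t => riccatiProfile lam ρ c (Real.tanh (a * (T - t))))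
      (riccatiDriver lam ρ (riccatiProfile lam ρ c (Real.tanh (a * (T - s))))) s := by
  have harg : HasDerivAt (fun t => a * (T - t)) (-a) s := by
    simpa using ((hasDerivAt_id s).const_sub T).const_mul a
  refine ((hasDerivAt_riccatiProfile hD).comp s ((Real.hasDerivAt_tanh _).comp s harg)).congr_deriv ?_
  unfold riccatiDriver riccatiProfile
  generalize Real.tanh (a * (T - s)) = u at hD ⊢
  have hD2 : (ρ + 2 * lam) * u + c * 2 ≠ 0 := by contrapose! hD; linear_combination hD / 2
  field_simp
  linear_combination 4 * ρ * (ρ + lam) * (1 - u ^ 2) * hac - 4 * ρ ^ 2 * hc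

end RiccatiProfile

lemma sqrt_mul_div_sqrt_add_mul_sqrt {lam ρ : ℝ} (hlam : 0 ≤ lam) (hlamρ : 0 < lam + ρ) :
    Real.sqrt lam * ρ / Real.sqrt (lam + ρ) * Real.sqrt (lam * (ρ + lam)) = ρ * lam := by
  have := (Real.sqrt_pos.2 hlamρ).ne'
  rw [add_comm ρ, Real.sqrt_mul hlam]
  field_simp
  rw [Real.sq_sqrt hlam, mul_comm]

theorem obizhaeva_wang_riccati_solution_general
    (T lam ρ : ℝ) (hlam : 0 < lam) (hρ : 0 < ρ)
    (K : ℝ → ℝ)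
    (hK : ∀ s, K s =
      (1/2) * (lam * Real.tanh (Real.sqrt lam * ρ * (T - s) / Real.sqrt (lam + ρ))
          + Real.sqrt (lam * (ρ + lam)))
        / ((ρ/2 + lam) * Real.tanh (Real.sqrt lam * ρ * (T - s) / Real.sqrt (lam + ρ))
          + Real.sqrt (lam * (ρ + lam)))) :
    (∀ s ∈ Icc 0 T,
      0 < (ρ/2 + lam) * Real.tanh (Real.sqrt lam * ρ * (T - s) / Real.sqrt (lam + ρ))
        + Real.sqrt (lam * (ρ + lam))) ∧
    K T = 1/2 ∧
    (∀ s ∈ Icc 0 T, 0 < K s ∧ K s ≤ 1/2) ∧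
    (∀ s ∈ Icc 0 T,
      HasDerivAt K
        (ρ ^ 2 / (ρ + lam) * K s ^ 2 + 2 * lam * ρ / (ρ + lam) * K s
          - lam * ρ / (ρ + lam)) s) := by
  simp only [mul_div_right_comm (Real.sqrt lam * ρ)] at hK ⊢
  set a := Real.sqrt lam * ρ / Real.sqrt (lam + ρ)
  set c := Real.sqrt (lam * (ρ + lam))
  have hc : 0 < c := by positivity
  have hac : a * c = ρ * lam := sqrt_mul_div_sqrt_add_mul_sqrt hlam.le (by positivity)
  have hc2 : c ^ 2 = lam * (ρ + lam) := Real.sq_sqrt (by positivity)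
  have hu : ∀ s ∈ Icc 0 T, 0 ≤ Real.tanh (a * (T - s)) := fun s hs =>
    Real.tanh_nonneg (mul_nonneg (by positivity) (sub_nonneg.2 hs.2))
  have hD : ∀ s ∈ Icc 0 T, 0 < (ρ/2 + lam) * Real.tanh (a * (T - s)) + c := fun s hs => by
    have := hu s hs
    positivity
  have hKeq : K = fun s => riccatiProfile lam ρ c (Real.tanh (a * (T - s))) := funext hK
  subst hKeq
  refine ⟨hD, ?_, fun s hs => ?_, fun s hs => ?_⟩
  · simpa using riccatiProfile_zero (lam := lam) (ρ := ρ) hc.ne'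
  · exact ⟨riccatiProfile_pos hlam.le hρ.le hc (hu s hs),
      riccatiProfile_le_half hlam.le hρ.le hc (hu s hs)⟩
  · exact hasDerivAt_riccatiProfile_tanh hac hc2 (by positivity) (hD s hs).ne'

/-- explicit solution of the Riccati equation in the Obizhaeva–Wang
model with risk aversion, Example 5.1: for `T > 0`, `lam > 0`, `ρ > 0` and
`K(s) = (1/2) (lam · tanh(√lam ρ (T-s)/√(lam+ρ)) + √(lam(ρ+lam)))
        / ((ρ/2+lam) · tanh(√lam ρ (T-s)/√(lam+ρ)) + √(lam(ρ+lam)))`,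
the denominator is strictly positive on `[0,T]`, `K(T) = 1/2`, `0 < K ≤ 1/2` on `[0,T]`,
and `K` is differentiable with
`K'(s) = (ρ²/(ρ+lam)) K(s)² + (2 lam ρ/(ρ+lam)) K(s) - lam ρ/(ρ+lam)` for every
`s ∈ [0,T]`. -/
theorem obizhaeva_wang_riccati_solution
    (T lam ρ : ℝ) (hT : 0 < T) (hlam : 0 < lam) (hρ : 0 < ρ)
    (K : ℝ → ℝ)
    (hK : ∀ s, K s =
      (1/2) * (lam * Real.tanh (Real.sqrt lam * ρ * (T - s) / Real.sqrt (lam + ρ))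
          + Real.sqrt (lam * (ρ + lam)))
        / ((ρ/2 + lam) * Real.tanh (Real.sqrt lam * ρ * (T - s) / Real.sqrt (lam + ρ))
          + Real.sqrt (lam * (ρ + lam)))) :
    (∀ s ∈ Icc 0 T,
      0 < (ρ/2 + lam) * Real.tanh (Real.sqrt lam * ρ * (T - s) / Real.sqrt (lam + ρ))
        + Real.sqrt (lam * (ρ + lam))) ∧
    K T = 1/2 ∧
    (∀ s ∈ Icc 0 T, 0 < K s ∧ K s ≤ 1/2) ∧
    (∀ s ∈ Icc 0 T,
      HasDerivAt K
        (ρ ^ 2 / (ρ + lam) * K s ^ 2 + 2 * lam * ρ / (ρ + lam) * K s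
          - lam * ρ / (ρ + lam)) s) :=
  obizhaeva_wang_riccati_solution_general T lam ρ hlam hρ K hK
end
end

section
/- Qualitative properties of the Riccati solution in Section 5.3: Let T>0, a>0 and ρ>a/2, and set κ := ρ − a/2 > 0. Suppose K:[0,T]→ℝ is continuous, satisfies a·K(s)+κ > 0 for every s∈[0,T], and K(s) = 1/2 − ∫_s^T ρ²·K(r)²/(a·K(r)+κ) dr for all s∈[0,T]. Then K is nondecreasing and 0 < K(s) ≤ 1/2 for all s∈[0,T]; moreover the function θ(s) := ρ·K(s)/(a·K(s)+κ) is nondecreasing and satisfies 0 < θ(s) ≤ 1/2 for all s∈[0,T]. -/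
open Set MeasureTheory intervalIntegral Filter Topology

noncomputable section

/-- qualitative properties of the Riccati solution in Section 5.3:
let `T > 0`, `a > 0`, `ρ > a/2` and `κ := ρ - a/2 > 0`. If `K : [0,T] → ℝ` is
continuous, `a K + κ > 0` on `[0,T]`, and `K(s) = 1/2 - ∫_s^T ρ² K(r)²/(a K(r)+κ) dr`
on `[0,T]`, then `K` is nondecreasing with `0 < K ≤ 1/2` on `[0,T]`, and
`θ(s) := ρ K(s)/(a K(s)+κ)` is nondecreasing with `0 < θ ≤ 1/2` on `[0,T]`. -/
theorem riccati_qualitative_properties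
    (T a ρ : ℝ) (hT : 0 < T) (ha : 0 < a) (hρ : a / 2 < ρ)
    (K : ℝ → ℝ) (hKcont : ContinuousOn K (Icc 0 T))
    (hpos : ∀ s ∈ Icc 0 T, 0 < a * K s + (ρ - a / 2))
    (hK : ∀ s ∈ Icc 0 T,
      K s = 1/2 - ∫ r in s..T, ρ ^ 2 * K r ^ 2 / (a * K r + (ρ - a / 2))) :
    MonotoneOn K (Icc 0 T) ∧
    (∀ s ∈ Icc 0 T, 0 < K s ∧ K s ≤ 1/2) ∧
    MonotoneOn (fun s => ρ * K s / (a * K s + (ρ - a / 2))) (Icc 0 T) ∧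
    (∀ s ∈ Icc 0 T,
      0 < ρ * K s / (a * K s + (ρ - a / 2)) ∧
      ρ * K s / (a * K s + (ρ - a / 2)) ≤ 1/2) := by
  set κ := ρ - a / 2 with hκdef
  have hκ : 0 < κ := by simp [hκdef]; linarith
  have hρ0 : 0 < ρ := by linarith
  set F : ℝ → ℝ := fun r => ρ ^ 2 * K r ^ 2 / (a * K r + κ) with hFdef
  -- continuity & integrability of F
  have hFcont : ContinuousOn F (Icc 0 T) := by
    apply ContinuousOn.div
    · exact continuousOn_const.mul (hKcont.pow 2)
    · exact (continuousOn_const.mul hKcont).add continuousOn_const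
    · exact fun s hs => ne_of_gt (hpos s hs)
  have hFint : ∀ s ∈ Icc 0 T, ∀ t ∈ Icc 0 T, IntervalIntegrable F volume s t := by
    intro s hs t ht
    exact (hFcont.mono (uIcc_subset_Icc hs ht)).intervalIntegrable
  have hF0 : ∀ r ∈ Icc 0 T, 0 ≤ F r :=
    fun r hr => div_nonneg (by positivity) (le_of_lt (hpos r hr))
  have hTmem : T ∈ Icc (0:ℝ) T := ⟨le_of_lt hT, le_refl T⟩
  have hKT : K T = 1/2 := by simpa using hK T hTmem
  -- difference identity
  have hdiff : ∀ s ∈ Icc 0 T, ∀ t ∈ Icc 0 T, s ≤ t →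
      K t - K s = ∫ r in s..t, F r := by
    intro s hs t ht hst
    have h1 := hK s hs
    have h2 := hK t ht
    have hadd : (∫ r in s..t, F r) + ∫ r in t..T, F r = ∫ r in s..T, F r :=
      integral_add_adjacent_intervals (hFint s hs t ht) (hFint t ht T hTmem)
    rw [h1, h2]; linarith
  -- monotonicity of K
  have hmono : MonotoneOn K (Icc 0 T) := by
    intro s hs t ht hst
    have := hdiff s hs t ht hst
    have hnn : 0 ≤ ∫ r in s..t, F r := by
      apply intervalIntegral.integral_nonneg hst
      intro r hr
      exact hF0 r ⟨le_trans hs.1 hr.1, le_trans hr.2 ht.2⟩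
    linarith
  have hle : ∀ s ∈ Icc 0 T, K s ≤ 1/2 := by
    intro s hs
    have := hmono hs hTmem hs.2
    linarith [hKT]
  -- positivity of K: by contradiction, Gronwall argument
  have hKpos : ∀ s ∈ Icc 0 T, 0 < K s := by
    by_contra hcon
    push_neg at hcon
    obtain ⟨s₀, hs₀, hs₀le⟩ := hcon
    set S : Set ℝ := {s ∈ Icc s₀ T | K s ≤ 0} with hSdef
    have hSne : S.Nonempty := ⟨s₀, ⟨⟨le_refl _, hs₀.2⟩, hs₀le⟩⟩
    have hSbdd : BddAbove S := ⟨T, fun x hx => hx.1.2⟩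
    have hSsub : S ⊆ Icc 0 T := fun x hx => ⟨le_trans hs₀.1 hx.1.1, hx.1.2⟩
    have hSclosed : IsClosed S := by
      have : S = Icc s₀ T ∩ K ⁻¹' Iic 0 := by ext x; simp [hSdef, and_comm]
      rw [this]
      exact (hKcont.mono (Icc_subset_Icc hs₀.1 (le_refl T))).preimage_isClosed_of_isClosed
        isClosed_Icc isClosed_Iic
    set σ := sSup S with hσdef
    have hσS : σ ∈ S := hSclosed.csSup_mem hSne hSbdd
    have hσmem : σ ∈ Icc 0 T := hSsub hσS
    have hσle : K σ ≤ 0 := hσS.2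
    have hσT : σ < T := by
      rcases lt_or_eq_of_le hσS.1.2 with h | h
      · exact h
      · exfalso; rw [h] at hσle; rw [hKT] at hσle; linarith
    -- K > 0 strictly to the right of σ
    have hright : ∀ s, σ < s → s ≤ T → 0 < K s := by
      intro s h1 h2
      by_contra h
      push_neg at h
      have : s ∈ S := ⟨⟨le_trans hσS.1.1 (le_of_lt h1), h2⟩, h⟩
      exact absurd (le_csSup hSbdd this) (not_le.mpr h1)
    -- K σ = 0
    have hσ0 : K σ = 0 := by
      refine le_antisymm hσle ?_
      have hne : (𝓝[Ioc σ T] σ).NeBot := by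
        rw [← mem_closure_iff_nhdsWithin_neBot, closure_Ioc (ne_of_lt hσT)]
        exact ⟨le_refl _, le_of_lt hσT⟩
      have htd : Filter.Tendsto K (𝓝[Ioc σ T] σ) (𝓝 (K σ)) :=
        ((hKcont σ hσmem).mono (fun x hx => ⟨le_trans hσmem.1 (le_of_lt hx.1), hx.2⟩)).tendsto
      refine ge_of_tendsto htd ?_
      filter_upwards [self_mem_nhdsWithin] with x hx
      exact le_of_lt (hright x hx.1 hx.2)
    have hKnn : ∀ s ∈ Icc σ T, 0 ≤ K s := by
      intro s hs
      rcases eq_or_lt_of_le hs.1 with h | h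
      · rw [← h, hσ0]
      · exact le_of_lt (hright s h hs.2)
    have hsubIcc : Icc σ T ⊆ Icc 0 T := Icc_subset_Icc hσmem.1 (le_refl T)
    set C := ρ ^ 2 / (2 * κ) with hCdef
    have hC : 0 < C := by positivity
    -- K s = ∫_σ^s F for s in [σ, T]
    have hKint : ∀ s ∈ Icc σ T, K s = ∫ r in σ..s, F r := by
      intro s hs
      have := hdiff σ hσmem s (hsubIcc hs) hs.1
      rw [hσ0] at this; linarith
    -- pointwise bound F ≤ C * K on [σ, T]
    have hFle : ∀ r ∈ Icc σ T, F r ≤ C * K r := by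
      intro r hr
      have h1 : 0 ≤ K r := hKnn r hr
      have h2 : K r ≤ 1/2 := hle r (hsubIcc hr)
      have hden : κ ≤ a * K r + κ := by nlinarith
      have hsq : K r ^ 2 ≤ K r / 2 := by nlinarith
      have hnum : ρ ^ 2 * K r ^ 2 ≤ ρ ^ 2 * (K r / 2) :=
        mul_le_mul_of_nonneg_left hsq (sq_nonneg ρ)
      calc F r ≤ ρ ^ 2 * (K r / 2) / κ := div_le_div₀ (by positivity) hnum hκ hden
        _ = C * K r := by rw [hCdef]; field_simp
    -- primitive of K starting at σ
    set g : ℝ → ℝ := fun s => ∫ r in σ..s, K r with hgdef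
    have hKcontσ : ContinuousOn K (Icc σ T) := hKcont.mono hsubIcc
    have hgcont : ContinuousOn g (Icc σ T) := by
      have h1 : IntegrableOn K (uIcc σ T) := by
        rw [uIcc_of_le (le_of_lt hσT)]
        exact hKcontσ.integrableOn_Icc
      have := intervalIntegral.continuousOn_primitive_interval h1
      rwa [uIcc_of_le (le_of_lt hσT)] at this
    have hKintgr : ∀ s ∈ Icc σ T, ∀ t ∈ Icc σ T, IntervalIntegrable K volume s t :=
      fun s hs t ht =>
        (hKcont.mono (uIcc_subset_Icc (hsubIcc hs) (hsubIcc ht))).intervalIntegrable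
    have hgderiv : ∀ s ∈ Ioo σ T, HasDerivAt g (K s) s := by
      intro s hs
      have hsmem : s ∈ Ioo 0 T := ⟨lt_of_le_of_lt hσmem.1 hs.1, hs.2⟩
      apply intervalIntegral.integral_hasDerivAt_right
      · exact hKintgr σ (left_mem_Icc.mpr (le_of_lt hσT)) s (Ioo_subset_Icc_self hs)
      · exact ContinuousOn.stronglyMeasurableAtFilter isOpen_Ioo
          (hKcont.mono Ioo_subset_Icc_self) s hsmem
      · exact hKcont.continuousAt (Icc_mem_nhds hsmem.1 hsmem.2)
    -- Gronwall inequality K s ≤ C * g s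
    have hKleg : ∀ s ∈ Icc σ T, K s ≤ C * g s := by
      intro s hs
      have hint1 : (∫ r in σ..s, F r) ≤ ∫ r in σ..s, C * K r := by
        apply intervalIntegral.integral_mono_on hs.1
          (hFint σ hσmem s (hsubIcc hs))
          (((continuousOn_const.mul hKcont).mono
            (uIcc_subset_Icc hσmem (hsubIcc hs))).intervalIntegrable)
        intro r hr
        exact hFle r ⟨hr.1, le_trans hr.2 hs.2⟩
      rw [hKint s hs]
      calc (∫ r in σ..s, F r) ≤ ∫ r in σ..s, C * K r := hint1
        _ = C * g s := by rw [hgdef]; exact intervalIntegral.integral_const_mul C K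
    -- exponentially damped primitive is antitone
    set E : ℝ → ℝ := fun s => g s * Real.exp (-C * s) with hEdef
    have hexpC : ∀ s : ℝ, HasDerivAt (fun u => Real.exp (-C * u)) (Real.exp (-C * s) * -C) s :=
      fun s => by
        have hlin : HasDerivAt (fun u : ℝ => -C * u) (-C) s := by
          simpa using (hasDerivAt_id s).const_mul (-C)
        exact hlin.exp
    have hED : ∀ s ∈ Ioo σ T,
        HasDerivAt E (K s * Real.exp (-C * s) + g s * (Real.exp (-C * s) * -C)) s :=
      fun s hs => (hgderiv s hs).mul (hexpC s)
    have hanti : AntitoneOn E (Icc σ T) := by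
      apply antitoneOn_of_deriv_nonpos (convex_Icc σ T)
      · exact hgcont.mul ((Real.continuous_exp.comp (continuous_const.mul continuous_id)).continuousOn)
      · rw [interior_Icc]
        exact fun s hs => (hED s hs).differentiableAt.differentiableWithinAt
      · rw [interior_Icc]
        intro s hs
        rw [(hED s hs).deriv]
        have h1 := hKleg s (Ioo_subset_Icc_self hs)
        have h2 : 0 < Real.exp (-C * s) := Real.exp_pos _
        nlinarith
    -- conclude g T ≤ 0, hence K T ≤ 0, contradiction with K T = 1/2
    have hE0 : E σ = 0 := by
      simp [hEdef, hgdef, intervalIntegral.integral_same]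
    have hET : E T ≤ 0 := by
      have := hanti (left_mem_Icc.mpr (le_of_lt hσT)) (right_mem_Icc.mpr (le_of_lt hσT))
        (le_of_lt hσT)
      rwa [hE0] at this
    have hgT : g T ≤ 0 := by
      have h2 : 0 < Real.exp (-C * T) := Real.exp_pos _
      by_contra h
      push_neg at h
      have : 0 < E T := mul_pos h h2
      linarith
    have hKTle : K T ≤ 0 := by
      have := hKleg T (right_mem_Icc.mpr (le_of_lt hσT))
      nlinarith
    rw [hKT] at hKTle
    linarith
  refine ⟨hmono, fun s hs => ⟨hKpos s hs, hle s hs⟩, ?_, ?_⟩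
  · intro s hs t ht hst
    have h1 := hpos s hs
    have h2 := hpos t ht
    simp only
    rw [div_le_div_iff₀ h1 h2]
    have h3 : ρ * κ * K s ≤ ρ * κ * K t :=
      mul_le_mul_of_nonneg_left (hmono hs ht hst) (le_of_lt (mul_pos hρ0 hκ))
    nlinarith [h3]
  · intro s hs
    constructor
    · exact div_pos (mul_pos hρ0 (hKpos s hs)) (hpos s hs)
    · rw [div_le_iff₀ (hpos s hs)]
      nlinarith [hle s hs, hKpos s hs]
end
end
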